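/- A permutation π ∈ S_n is a Fishburn permutation avoiding the classical pattern 1342 if and only if there exists k with 1 ≤ k ≤ n such that π(k) = 1, π(1) > π(2) > ⋯ > π(k−1), and the word π(k+1)⋯π(n) (an arbitrary sequence of the remaining n−k values) avoids the classical pattern 231. -/

import Mathlib

open Finset

/-- The list of values of a permutation of `Fin n` (0-based values). -/
def permList {n : ℕ} (π : Equiv.Perm (Fin n)) : List ℕ :=
  (List.finRange n).map fun i => (π i : ℕ)

/-- A sequence `w` of distinct integers contains the classical pattern `p`:
some subsequence of `w` is order-isomorphic to `p`. -/
def SeqContains (w p : List ℕ) : Prop :=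
  ∃ f : Fin p.length → Fin w.length, StrictMono f ∧
    ∀ i j : Fin p.length, p.get i < p.get j ↔ w.get (f i) < w.get (f j)

/-- A permutation avoids a classical pattern (given as the list of its values). -/
def AvoidsPat {n : ℕ} (π : Equiv.Perm (Fin n)) (p : List ℕ) : Prop :=
  ¬ SeqContains (permList π) p

/-- `π` is a Fishburn permutation: it avoids the bivincular pattern (231,{1},{1}),
i.e. there are no positions `i < k` with `π i = π k + 1` and `π i < π (i+1)`
(0-based values, so `π i = π k + 1` encodes `π(i) > 1` and `π(k) = π(i) - 1`). -/
def IsFishburn {n : ℕ} (π : Equiv.Perm (Fin n)) : Prop :=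
  ∀ i k : ℕ, ∀ hi : i < n, ∀ hk : k < n, ∀ _hik : i < k,
    (π ⟨i, hi⟩ : ℕ) = (π ⟨k, hk⟩ : ℕ) + 1 →
    ¬ ((π ⟨i, hi⟩ : ℕ) < (π ⟨i + 1, by omega⟩ : ℕ))

/-- A permutation is indecomposable if it is not the direct sum of two nonempty
permutations, i.e. no proper nonempty initial segment of positions maps onto the
corresponding initial segment of values. -/
def IsIndecomposable {n : ℕ} (π : Equiv.Perm (Fin n)) : Prop :=
  ¬ ∃ k : ℕ, 0 < k ∧ k < n ∧ ∀ i : Fin n, (i : ℕ) < k → (π i : ℕ) < k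

/-! ### Auxiliary machinery -/

def pval {n : ℕ} (π : Equiv.Perm (Fin n)) (i : ℕ) : ℕ :=
  if h : i < n then (π ⟨i, h⟩ : ℕ) else 0

lemma pval_eq {n : ℕ} (π : Equiv.Perm (Fin n)) (i : ℕ) (h : i < n) :
    pval π i = (π ⟨i, h⟩ : ℕ) := dif_pos h

lemma pval_lt {n : ℕ} (π : Equiv.Perm (Fin n)) (i : ℕ) (h : i < n) :
    pval π i < n := by rw [pval_eq π i h]; exact (π ⟨i, h⟩).isLt

lemma pval_inj {n : ℕ} (π : Equiv.Perm (Fin n)) {i j : ℕ} (hi : i < n) (hj : j < n)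
    (h : pval π i = pval π j) : i = j := by
  rw [pval_eq π i hi, pval_eq π j hj] at h
  have h2 : (⟨i, hi⟩ : Fin n) = ⟨j, hj⟩ := π.injective (Fin.val_injective h)
  simpa using h2

lemma pval_surj {n : ℕ} (π : Equiv.Perm (Fin n)) (v : ℕ) (h : v < n) :
    ∃ i, i < n ∧ pval π i = v := by
  refine ⟨(π.symm ⟨v, h⟩).val, (π.symm ⟨v, h⟩).isLt, ?_⟩
  rw [pval_eq _ _ (π.symm ⟨v, h⟩).isLt]
  simp

lemma permList_length {n : ℕ} (π : Equiv.Perm (Fin n)) : (permList π).length = n := by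
  simp [permList]

lemma permList_get {n : ℕ} (π : Equiv.Perm (Fin n)) (i : Fin (permList π).length) :
    (permList π).get i = pval π i.val := by
  have h : (i : ℕ) < n := by have := i.2; simpa [permList] using this
  rw [pval_eq _ _ h]
  rw [List.get_eq_getElem]
  simp [permList]

lemma permList_getElem {n : ℕ} (π : Equiv.Perm (Fin n)) (i : ℕ)
    (h : i < (permList π).length) : (permList π)[i] = pval π i := by
  have := permList_get π ⟨i, h⟩
  simpa [List.get_eq_getElem] using this

lemma permList_drop_length {n : ℕ} (π : Equiv.Perm (Fin n)) (k : ℕ) :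
    ((permList π).drop k).length = n - k := by simp [permList]

lemma permList_drop_get {n : ℕ} (π : Equiv.Perm (Fin n)) (k : ℕ)
    (i : Fin ((permList π).drop k).length) :
    ((permList π).drop k).get i = pval π (k + i.val) := by
  have h : k + i.val < n := by have := i.2; simp [permList] at this; omega
  rw [pval_eq _ _ h]
  rw [List.get_eq_getElem]
  simp [permList, List.get_eq_getElem, List.getElem_drop]

lemma seqContains_1342 {n : ℕ} (π : Equiv.Perm (Fin n)) :
    SeqContains (permList π) [1,3,4,2] ↔
    ∃ a b c d : ℕ, a < b ∧ b < c ∧ c < d ∧ d < n ∧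
      pval π a < pval π d ∧ pval π d < pval π b ∧ pval π b < pval π c := by
  constructor
  · rintro ⟨g, hg, hiso⟩
    refine ⟨(g ⟨0, by norm_num⟩).val, (g ⟨1, by norm_num⟩).val, (g ⟨2, by norm_num⟩).val,
      (g ⟨3, by norm_num⟩).val, hg (by decide), hg (by decide), hg (by decide),
      lt_of_lt_of_eq (g ⟨3, by norm_num⟩).isLt (permList_length π), ?_, ?_, ?_⟩
    · have := (hiso ⟨0, by norm_num⟩ ⟨3, by norm_num⟩).mp (by decide)
      rwa [permList_get, permList_get] at this
    · have := (hiso ⟨3, by norm_num⟩ ⟨1, by norm_num⟩).mp (by decide)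
      rwa [permList_get, permList_get] at this
    · have := (hiso ⟨1, by norm_num⟩ ⟨2, by norm_num⟩).mp (by decide)
      rwa [permList_get, permList_get] at this
  · rintro ⟨a, b, c, d, hab, hbc, hcd, hdn, h1, h2, h3⟩
    have hlen := permList_length π
    refine ⟨fun t => Fin.cast hlen.symm
      (![⟨a, by omega⟩, ⟨b, by omega⟩, ⟨c, by omega⟩, ⟨d, hdn⟩] t), ?_, ?_⟩
    · intro i j hij
      fin_cases i <;> fin_cases j <;>
        simp_all [Fin.lt_def] <;> omega
    · intro i j
      fin_cases i <;> fin_cases j <;>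
        simp [List.get, List.get_eq_getElem, permList_getElem, Fin.lt_def] <;> omega

lemma seqContains_231 {n : ℕ} (π : Equiv.Perm (Fin n)) (k : ℕ) :
    SeqContains ((permList π).drop k) [2,3,1] ↔
    ∃ a b c : ℕ, k ≤ a ∧ a < b ∧ b < c ∧ c < n ∧
      pval π c < pval π a ∧ pval π a < pval π b := by
  constructor
  · rintro ⟨g, hg, hiso⟩
    have hlen := permList_drop_length π k
    have h2 : (g ⟨2, by norm_num⟩).val < n - k := lt_of_lt_of_eq (g ⟨2, by norm_num⟩).isLt hlen
    refine ⟨k + (g ⟨0, by norm_num⟩).val, k + (g ⟨1, by norm_num⟩).val,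
      k + (g ⟨2, by norm_num⟩).val, Nat.le_add_right _ _, ?_, ?_, by omega, ?_, ?_⟩
    · have := hg (show (⟨0, by norm_num⟩ : Fin [2,3,1].length) < ⟨1, by norm_num⟩ by decide)
      omega
    · have := hg (show (⟨1, by norm_num⟩ : Fin [2,3,1].length) < ⟨2, by norm_num⟩ by decide)
      omega
    · have := (hiso ⟨2, by norm_num⟩ ⟨0, by norm_num⟩).mp (by decide)
      rwa [permList_drop_get, permList_drop_get] at this
    · have := (hiso ⟨0, by norm_num⟩ ⟨1, by norm_num⟩).mp (by decide)
      rwa [permList_drop_get, permList_drop_get] at this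
  · rintro ⟨a, b, c, hka, hab, hbc, hcn, h1, h2⟩
    have hlen := permList_drop_length π k
    have ea : k + (a - k) = a := by omega
    have eb : k + (b - k) = b := by omega
    have ec : k + (c - k) = c := by omega
    have hdga : ∀ (i : Fin ((permList π).drop k).length),
        ((permList π).drop k).get i = pval π (k + i.val) := permList_drop_get π k
    refine ⟨fun t => Fin.cast hlen.symm
      (![⟨a - k, by omega⟩, ⟨b - k, by omega⟩, ⟨c - k, by omega⟩] t), ?_, ?_⟩
    · intro i j hij
      fin_cases i <;> fin_cases j <;> simp_all [Fin.lt_def] <;> omega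
    · intro i j
      fin_cases i <;> fin_cases j <;>
        simp [List.get, hdga, permList_getElem, ea, eb, ec, Fin.lt_def] <;> omega

theorem stmt17 (n : ℕ) (hn : 1 ≤ n) (π : Equiv.Perm (Fin n)) :
    (IsFishburn π ∧ AvoidsPat π [1, 3, 4, 2]) ↔
      ∃ k : ℕ, 1 ≤ k ∧ k ≤ n ∧
        ∃ hk : k - 1 < n, (π ⟨k - 1, hk⟩ : ℕ) = 0 ∧
          (∀ i j : Fin n, i < j → (j : ℕ) + 1 < k → π j < π i) ∧
          ¬ SeqContains ((permList π).drop k) [2, 3, 1] := by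
  constructor
  · rintro ⟨hF, hA⟩
    have hF' : ∀ i j : ℕ, i < n → j < n → i < j →
        pval π i = pval π j + 1 → ¬ (pval π i < pval π (i+1)) := by
      intro i j hi hj hij heq
      have h1 : i + 1 < n := by omega
      rw [pval_eq π i hi, pval_eq π j hj] at heq
      rw [pval_eq π i hi, pval_eq π (i+1) h1]
      exact hF i j hi hj hij heq
    have hA' : ¬ ∃ a b c d : ℕ, a < b ∧ b < c ∧ c < d ∧ d < n ∧
        pval π a < pval π d ∧ pval π d < pval π b ∧ pval π b < pval π c := by
      rw [← seqContains_1342]; exact hA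
    set m := (π.symm ⟨0, hn⟩).val with hm_def
    have hm : m < n := (π.symm ⟨0, hn⟩).isLt
    have hfm : pval π m = 0 := by
      rw [pval_eq π m hm]
      simp [hm_def]
    have key : ∀ v i, i + 1 < m → pval π i = v → pval π (i+1) < pval π i := by
      intro v
      induction v using Nat.strong_induction_on with
      | _ v ih =>
        intro i him hv
        have hin : i < n := by omega
        have h1n : i + 1 < n := by omega
        by_contra hnot
        have hne : pval π (i+1) ≠ pval π i := fun h => by
          have := pval_inj π h1n hin h; omega
        have hasc : pval π i < pval π (i+1) := by omega
        have hv1 : 1 ≤ v := by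
          rcases Nat.eq_zero_or_pos v with h0 | h
          · exfalso
            have : i = m := pval_inj π hin hm (by rw [hv, h0, hfm])
            omega
          · exact h
        have hvn : v < n := hv ▸ pval_lt π i hin
        obtain ⟨p, hpn, hfp⟩ := pval_surj π (v-1) (by omega)
        have hpi : p ≠ i := by intro h; rw [h, hv] at hfp; omega
        rcases lt_or_gt_of_ne hpi with hpl | hpg
        · have chain : ∀ d, p + d ≤ i → pval π (p + d) + d ≤ v - 1 := by
            intro d
            induction d with
            | zero => intro _; simpa using Nat.le_of_eq hfp
            | succ d ihd =>
              intro hle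
              have hd1 : p + d ≤ i := by omega
              have h2 := ihd hd1
              have h3 : pval π (p + d + 1) < pval π (p + d) :=
                ih (pval π (p + d)) (by omega) (p + d) (by omega) rfl
              show pval π (p + d + 1) + (d + 1) ≤ v - 1
              omega
          have h4 := chain (i - p) (by omega)
          rw [show p + (i - p) = i from by omega] at h4
          omega
        · exact hF' i p hin hpn hpg (by omega) hasc
    have dec : ∀ j, j < m → ∀ i, i < j → pval π j < pval π i := by
      intro j
      induction j with
      | zero => intro _ i hi; omega
      | succ j ihj =>
        intro hjm i hij
        have hadj : pval π (j+1) < pval π j := key (pval π j) j hjm rfl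
        rcases Nat.lt_succ_iff_lt_or_eq.mp hij with h | h
        · exact hadj.trans (ihj (by omega) i h)
        · rw [h]; exact hadj
    refine ⟨m + 1, by omega, by omega, by omega, ?_, ?_, ?_⟩
    · have e : m + 1 - 1 = m := by omega
      rw [← pval_eq π (m+1-1) (by omega)]
      rw [e]; exact hfm
    · intro i j hij hjk
      have hd := dec j.val (by omega) i.val hij
      rw [pval_eq π j.val j.2, pval_eq π i.val i.2] at hd
      exact hd
    · rw [seqContains_231]
      rintro ⟨a, b, c, hka, hab, hbc, hcn, g1, g2⟩
      have hca : c ≠ m := by omega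
      have hc0 : 0 < pval π c := by
        rcases Nat.eq_zero_or_pos (pval π c) with h0 | h
        · exact absurd (pval_inj π (by omega) hm (h0.trans hfm.symm)) hca
        · exact h
      exact hA' ⟨m, a, b, c, by omega, hab, hbc, hcn, by omega, g1, g2⟩
  · rintro ⟨k, hk1, hk2, hk, h0, hdecF, h231⟩
    have h0' : pval π (k-1) = 0 := by rw [pval_eq π (k-1) hk]; exact h0
    have hdec : ∀ i j : ℕ, i < j → j + 1 < k → pval π j < pval π i := by
      intro i j hij hjk
      have hjn : j < n := by omega
      have hin : i < n := by omega
      have h := hdecF ⟨i, hin⟩ ⟨j, hjn⟩ (by simpa [Fin.lt_def] using hij) (by simpa using hjk)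
      rw [pval_eq π j hjn, pval_eq π i hin]
      exact h
    have h231' : ¬ ∃ a b c : ℕ, k ≤ a ∧ a < b ∧ b < c ∧ c < n ∧
        pval π c < pval π a ∧ pval π a < pval π b := by
      rw [← seqContains_231]; exact h231
    constructor
    · intro i j hi hj hij heq hlt
      have h1n : i + 1 < n := by omega
      have heq' : pval π i = pval π j + 1 := by
        rw [pval_eq π i hi, pval_eq π j hj]; exact heq
      have hlt' : pval π i < pval π (i+1) := by
        rw [pval_eq π i hi, pval_eq π (i+1) h1n]; exact hlt
      rcases lt_trichotomy (i+1) k with hcase | hcase | hcase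
      · by_cases h2 : i + 2 < k
        · have := hdec i (i+1) (by omega) h2
          omega
        · have he : i + 1 = k - 1 := by omega
          rw [he, h0'] at hlt'; omega
      · have he : i = k - 1 := by omega
        rw [he, h0'] at heq'; omega
      · have hki : k ≤ i := by omega
        have hij2 : i + 1 < j := by
          by_cases h : i + 1 = j
          · exfalso; rw [← h] at heq'; omega
          · omega
        exact h231' ⟨i, i+1, j, hki, by omega, hij2, by omega, by omega, hlt'⟩
    · intro hcon
      rw [seqContains_1342] at hcon
      obtain ⟨a, b, c, d, hab, hbc, hcd, hdn, x1, x2, x3⟩ := hcon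
      have hkb : k ≤ b := by
        by_contra hlt2
        push_neg at hlt2
        by_cases h2 : b + 1 < k
        · have := hdec a b hab h2; omega
        · have hb : b = k - 1 := by omega
          rw [hb, h0'] at x2; omega
      exact h231' ⟨b, c, d, hkb, hbc, hcd, hdn, x2, x3⟩
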